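/- arXiv:1612.01095 — 6 statements merged into one kernel-verified Lean document; each statement's English description precedes it below -/
import Mathlib

section
/- Let V be a finite set and let E be a set of elementary triplets over V satisfying ci0 and ci1. Then the independence model m(E) satisfies CI0 and CI1, E = e(m(E)), and E equals exactly the set of elementary triplets i⊥j|K such that i⊥j|K ∈ m(E). -/
variable {V : Type*} [DecidableEq V]

/-- CI0 (symmetry): for all pairwise disjoint `I J K`, `I ⊥ J | K ∈ M ↔ J ⊥ I | K ∈ M`. -/
def CI0 (M : Set (Finset V × Finset V × Finset V)) : Prop :=
  ∀ I J K : Finset V, Disjoint I J → Disjoint I K → Disjoint J K →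
    ((I, J, K) ∈ M ↔ (J, I, K) ∈ M)

/-- CI1: for all pairwise disjoint `I J K L`,
`(I ⊥ J | K ∪ L ∈ M and I ⊥ K | L ∈ M) ↔ I ⊥ J ∪ K | L ∈ M`. -/
def CI1 (M : Set (Finset V × Finset V × Finset V)) : Prop :=
  ∀ I J K L : Finset V, Disjoint I J → Disjoint I K → Disjoint I L →
    Disjoint J K → Disjoint J L → Disjoint K L →
    (((I, J, K ∪ L) ∈ M ∧ (I, K, L) ∈ M) ↔ (I, J ∪ K, L) ∈ M)

/-- ci0: for all distinct `i j` and `L ⊆ V \ {i, j}`, `i ⊥ j | L ∈ E ↔ j ⊥ i | L ∈ E`. -/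
def ci0 (E : Set (V × V × Finset V)) : Prop :=
  ∀ (i j : V) (L : Finset V), i ≠ j → i ∉ L → j ∉ L →
    ((i, j, L) ∈ E ↔ (j, i, L) ∈ E)

/-- ci1: for all distinct `i j k` and `L ⊆ V \ {i, j, k}`,
`(i ⊥ j | {k} ∪ L ∈ E and i ⊥ k | L ∈ E) ↔ (i ⊥ k | {j} ∪ L ∈ E and i ⊥ j | L ∈ E)`. -/
def ci1 (E : Set (V × V × Finset V)) : Prop :=
  ∀ (i j k : V) (L : Finset V), i ≠ j → i ≠ k → j ≠ k → i ∉ L → j ∉ L → k ∉ L →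
    (((i, j, insert k L) ∈ E ∧ (i, k, L) ∈ E) ↔
      ((i, k, insert j L) ∈ E ∧ (i, j, L) ∈ E))

/-- `e(M)`: the elementary triplets `i ⊥ j | M'` such that there is `I ⊥ J | K ∈ M` with
`i ∈ I`, `j ∈ J` and `K ⊆ M' ⊆ (I \ {i}) ∪ (J \ {j}) ∪ K`. -/
def eMap (M : Set (Finset V × Finset V × Finset V)) : Set (V × V × Finset V) :=
  { T | ∃ I J K : Finset V, (I, J, K) ∈ M ∧ T.1 ∈ I ∧ T.2.1 ∈ J ∧
      K ⊆ T.2.2 ∧ T.2.2 ⊆ I.erase T.1 ∪ J.erase T.2.1 ∪ K }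

/-- `m(E)`: the triplets `I ⊥ J | K` (with `I`, `J`, `K` pairwise disjoint) such that
`i ⊥ j | M' ∈ E` for all `i ∈ I`, `j ∈ J` and all `M'` with
`K ⊆ M' ⊆ (I \ {i}) ∪ (J \ {j}) ∪ K`. -/
def mMap (E : Set (V × V × Finset V)) : Set (Finset V × Finset V × Finset V) :=
  { T | Disjoint T.1 T.2.1 ∧ Disjoint T.1 T.2.2 ∧ Disjoint T.2.1 T.2.2 ∧
      ∀ i ∈ T.1, ∀ j ∈ T.2.1, ∀ M' : Finset V, T.2.2 ⊆ M' →
        M' ⊆ T.1.erase i ∪ T.2.1.erase j ∪ T.2.2 → (i, j, M') ∈ E }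

/-- Auxiliary contraction lemma for elementary triplets. -/
lemma elemKey (E : Set (V × V × Finset V)) (h1 : ci1 E)
    (i : V) (A J K L : Finset V)
    (hiA : i ∉ A) (hiJ : i ∉ J) (hiK : i ∉ K) (hiL : i ∉ L)
    (hAJ : Disjoint A J) (hAK : Disjoint A K) (_hAL : Disjoint A L)
    (hJK : Disjoint J K) (hJL : Disjoint J L) (hKL : Disjoint K L)
    (H1 : ∀ t ∈ J, ∀ M : Finset V, K ∪ L ⊆ M → M ⊆ A ∪ J.erase t ∪ (K ∪ L) → (i, t, M) ∈ E)
    (H2 : ∀ k ∈ K, ∀ M : Finset V, L ⊆ M → M ⊆ A ∪ K.erase k ∪ L → (i, k, M) ∈ E) :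
    ∀ t ∈ J ∪ K, ∀ M : Finset V, L ⊆ M → M ⊆ A ∪ (J ∪ K).erase t ∪ L → (i, t, M) ∈ E := by
  have hmem : ∀ (t : V) (M : Finset V), M ⊆ A ∪ (J ∪ K).erase t ∪ L →
      ∀ x ∈ M, x ∈ A ∨ ((x ∈ J ∨ x ∈ K) ∧ x ≠ t) ∨ x ∈ L := by
    intro t M hMs x hx
    have := hMs hx
    simp only [Finset.mem_union, Finset.mem_erase] at this
    tauto
  have hiM : ∀ (t : V) (M : Finset V), M ⊆ A ∪ (J ∪ K).erase t ∪ L → i ∉ M := by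
    intro t M hMs hx
    rcases hmem t M hMs i hx with h | ⟨h | h, _⟩ | h <;>
      first | exact hiA h | exact hiJ h | exact hiK h | exact hiL h
  have htM : ∀ t ∈ J ∪ K, ∀ M : Finset V, M ⊆ A ∪ (J ∪ K).erase t ∪ L → t ∉ M := by
    intro t ht M hMs hx
    rcases hmem t M hMs t hx with h | ⟨_, hne⟩ | h
    · rcases Finset.mem_union.1 ht with h' | h'
      · exact Finset.disjoint_left.1 hAJ h h'
      · exact Finset.disjoint_left.1 hAK h h'
    · exact hne rfl
    · rcases Finset.mem_union.1 ht with h' | h'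
      · exact Finset.disjoint_left.1 hJL h' h
      · exact Finset.disjoint_left.1 hKL h' h
  have T1 : ∀ t ∈ J, ∀ M : Finset V, L ⊆ M → M ⊆ A ∪ (J ∪ K).erase t ∪ L → K ⊆ M →
      (i, t, M) ∈ E := by
    intro t ht M hLM hMs hKM
    refine H1 t ht M (Finset.union_subset hKM hLM) ?_
    intro x hx
    rcases hmem t M hMs x hx with h | ⟨h | h, hne⟩ | h <;>
      simp only [Finset.mem_union, Finset.mem_erase] <;> tauto
  have T2 : ∀ t ∈ K, ∀ M : Finset V, L ⊆ M → M ⊆ A ∪ (J ∪ K).erase t ∪ L → M ∩ J = ∅ →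
      (i, t, M) ∈ E := by
    intro t ht M hLM hMs hMJ
    refine H2 t ht M hLM ?_
    intro x hx
    have hxJ : x ∉ J := fun hxJ =>
      (Finset.notMem_empty x) (hMJ ▸ Finset.mem_inter.2 ⟨hx, hxJ⟩)
    rcases hmem t M hMs x hx with h | ⟨h | h, hne⟩ | h <;>
      simp only [Finset.mem_union, Finset.mem_erase] <;> tauto
  suffices Hn : ∀ n : ℕ, ∀ t ∈ J ∪ K, ∀ M : Finset V, L ⊆ M →
      M ⊆ A ∪ (J ∪ K).erase t ∪ L →
      (K \ insert t M).card + (M ∩ J).card ≤ n → (i, t, M) ∈ E by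
    exact fun t ht M hLM hMs => Hn _ t ht M hLM hMs le_rfl
  intro n
  induction n with
  | zero =>
    intro t ht M hLM hMs hc
    have hc1 : K \ insert t M = ∅ := Finset.card_eq_zero.1 (by omega)
    have hc2 : M ∩ J = ∅ := Finset.card_eq_zero.1 (by omega)
    rcases Finset.mem_union.1 ht with htJ | htK
    · refine T1 t htJ M hLM hMs ?_
      intro x hx
      rcases Finset.mem_insert.1 ((Finset.sdiff_eq_empty_iff_subset.1 hc1) hx) with h | h
      · exact absurd htJ (h ▸ Finset.disjoint_right.1 hJK hx)
      · exact h
    · exact T2 t htK M hLM hMs hc2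
  | succ n ih =>
    intro t ht M hLM hMs hc
    have htM' : t ∉ M := htM t ht M hMs
    have hiM' : i ∉ M := hiM t M hMs
    rcases Finset.mem_union.1 ht with htJ | htK
    · -- t ∈ J
      by_cases hKM : K ⊆ M
      · exact T1 t htJ M hLM hMs hKM
      · obtain ⟨k, hkK, hkM⟩ := Finset.not_subset.1 hKM
        have htk : t ≠ k := fun h => Finset.disjoint_left.1 hJK htJ (h ▸ hkK)
        have hik : i ≠ k := fun h => hiK (h ▸ hkK)
        have hit : i ≠ t := fun h => hiJ (h ▸ htJ)
        have hkJ : k ∉ J := Finset.disjoint_right.1 hJK hkK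
        have hkiM : k ∈ K \ insert t M := Finset.mem_sdiff.2 ⟨hkK, by
          simp only [Finset.mem_insert]; push_neg; exact ⟨fun h => htk h.symm, hkM⟩⟩
        have hKiM : K \ insert t M = K \ M := by
          rw [Finset.sdiff_insert, Finset.erase_eq_of_notMem]
          simp only [Finset.mem_sdiff]
          exact fun h => Finset.disjoint_left.1 hJK htJ h.1
        have s1 : (i, t, insert k M) ∈ E := by
          refine ih t ht (insert k M) (hLM.trans (Finset.subset_insert _ _)) ?_ ?_
          · refine Finset.insert_subset ?_ hMs
            simp only [Finset.mem_union, Finset.mem_erase]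
            exact Or.inl (Or.inr ⟨fun h => htk h.symm, Or.inr hkK⟩)
          · have e1 : K \ insert t (insert k M) = (K \ insert t M).erase k := by
              rw [Finset.insert_comm, Finset.sdiff_insert]
            have e2 : insert k M ∩ J = M ∩ J := Finset.insert_inter_of_notMem hkJ
            rw [e1, e2, Finset.card_erase_of_mem hkiM]
            have : 1 ≤ (K \ insert t M).card := Finset.card_pos.2 ⟨k, hkiM⟩
            omega
        have s2 : (i, k, M) ∈ E := by
          refine ih k (Finset.mem_union_right _ hkK) M hLM ?_ ?_
          · intro x hx
            rcases hmem t M hMs x hx with h | ⟨h | h, _⟩ | h <;>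
              simp only [Finset.mem_union, Finset.mem_erase]
            · tauto
            · exact Or.inl (Or.inr ⟨fun hh => hkM (hh ▸ hx), Or.inl h⟩)
            · exact Or.inl (Or.inr ⟨fun hh => hkM (hh ▸ hx), Or.inr h⟩)
            · tauto
          · have e1 : K \ insert k M = (K \ M).erase k := by rw [Finset.sdiff_insert]
            have hkKM : k ∈ K \ M := Finset.mem_sdiff.2 ⟨hkK, hkM⟩
            rw [e1, Finset.card_erase_of_mem hkKM, ← hKiM]
            have : 1 ≤ (K \ insert t M).card := Finset.card_pos.2 ⟨k, hkiM⟩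
            omega
        exact ((h1 i t k M hit hik htk hiM' htM' hkM).1 ⟨s1, s2⟩).2
    · -- t ∈ K
      rcases (M ∩ J).eq_empty_or_nonempty with hMJ | ⟨j, hjMJ⟩
      · exact T2 t htK M hLM hMs hMJ
      · have hjM : j ∈ M := (Finset.mem_inter.1 hjMJ).1
        have hjJ : j ∈ J := (Finset.mem_inter.1 hjMJ).2
        have htj : t ≠ j := fun h => Finset.disjoint_left.1 hJK hjJ (h ▸ htK)
        have hij : i ≠ j := fun h => hiJ (h ▸ hjJ)
        have hit : i ≠ t := fun h => hiK (h ▸ htK)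
        have hjK : j ∉ K := Finset.disjoint_left.1 hJK hjJ
        have hjL' : j ∉ L := Finset.disjoint_left.1 hJL hjJ
        set N := M.erase j with hN
        have hMeq : insert j N = M := Finset.insert_erase hjM
        have hjN : j ∉ N := Finset.notMem_erase _ _
        have htN : t ∉ N := fun h => htM' (Finset.erase_subset _ _ h)
        have hiN : i ∉ N := fun h => hiM' (Finset.erase_subset _ _ h)
        have hNM : N ⊆ M := Finset.erase_subset _ _
        have hLN : L ⊆ N := fun x hx => Finset.mem_erase.2 ⟨fun h => hjL' (h ▸ hx), hLM hx⟩
        have ecomm : insert j (insert t N) = insert t M := by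
          rw [Finset.insert_comm, hMeq]
        have e2 : (insert t N) ∩ J = (M ∩ J).erase j := by
          rw [Finset.insert_inter_of_notMem (Finset.disjoint_right.1 hJK htK), hN,
            Finset.erase_inter]
        have e3 : K \ insert t N = K \ insert t M := by
          conv_rhs => rw [← ecomm, Finset.sdiff_insert]
          rw [Finset.erase_eq_of_notMem (fun h => hjK (Finset.mem_sdiff.1 h).1)]
        have hd : 1 ≤ (M ∩ J).card := Finset.card_pos.2 ⟨j, hjMJ⟩
        have s1 : (i, j, insert t N) ∈ E := by
          refine ih j (Finset.mem_union_left _ hjJ) (insert t N)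
            (hLN.trans (Finset.subset_insert _ _)) ?_ ?_
          · intro x hx
            rcases Finset.mem_insert.1 hx with rfl | hx'
            · simp only [Finset.mem_union, Finset.mem_erase]
              exact Or.inl (Or.inr ⟨htj, Or.inr htK⟩)
            · have hxM : x ∈ M := hNM hx'
              have hxj : x ≠ j := Finset.ne_of_mem_erase hx'
              rcases hmem t M hMs x hxM with h | ⟨h | h, _⟩ | h <;>
                simp only [Finset.mem_union, Finset.mem_erase]
              · tauto
              · exact Or.inl (Or.inr ⟨hxj, Or.inl h⟩)
              · exact Or.inl (Or.inr ⟨hxj, Or.inr h⟩)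
              · tauto
          · rw [show K \ insert j (insert t N) = K \ insert t M from by rw [ecomm],
              e2, Finset.card_erase_of_mem hjMJ]
            omega
        have s2 : (i, t, N) ∈ E := by
          refine ih t ht N hLN (hNM.trans hMs) ?_
          rw [e3, hN, Finset.erase_inter, Finset.card_erase_of_mem hjMJ]
          omega
        have := ((h1 i t j N hit hij htj hiN htN hjN).2 ⟨s1, s2⟩).1
        rwa [hMeq] at this

/-- If a set `E` of elementary triplets over a finite set `V` satisfies
ci0 and ci1, then `m(E)` satisfies CI0 and CI1, `E = e(m(E))`, and `E` is exactly the set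
of elementary triplets `i ⊥ j | K` such that `{i} ⊥ {j} | K ∈ m(E)`. -/
theorem mMap_of_ci01 [Fintype V] (E : Set (V × V × Finset V))
    (hE : ∀ T ∈ E, T.1 ≠ T.2.1 ∧ T.1 ∉ T.2.2 ∧ T.2.1 ∉ T.2.2)
    (h0 : ci0 E) (h1 : ci1 E) :
    (CI0 (mMap E) ∧ CI1 (mMap E)) ∧ E = eMap (mMap E) ∧
      E = { T : V × V × Finset V | ({T.1}, {T.2.1}, T.2.2) ∈ mMap E } := by

  classical
  -- singleton triplets of E are in mMap E
  have hsingle : ∀ T ∈ E, ({T.1}, {T.2.1}, T.2.2) ∈ mMap E := by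
    rintro ⟨a, b, C⟩ hT
    obtain ⟨hab, haC, hbC⟩ := hE _ hT
    refine ⟨by simpa using hab, by simpa using haC, by simpa using hbC, ?_⟩
    intro i hi j hj M' hCM hM'
    simp only [Finset.mem_singleton] at hi hj
    subst hi; subst hj
    have hMC : M' = C :=
      le_antisymm (by simpa [Finset.erase_singleton] using hM') hCM
    rw [hMC]; exact hT
  have hswap : ∀ I J K : Finset V, (I, J, K) ∈ mMap E → (J, I, K) ∈ mMap E := by
    rintro I J K ⟨hIJ, hIK, hJK, h⟩
    refine ⟨hIJ.symm, hJK, hIK, ?_⟩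
    intro a ha b hb M' hKM hM'
    have hM'' : M' ⊆ I.erase b ∪ J.erase a ∪ K := by
      intro x hx
      have := hM' hx
      simp only [Finset.mem_union] at this ⊢
      tauto
    have hba : (b, a, M') ∈ E := h b hb a ha M' hKM hM''
    have hne : b ≠ a := fun h' => Finset.disjoint_left.1 hIJ hb (h' ▸ ha)
    have hbM : b ∉ M' := by
      intro hx
      rcases Finset.mem_union.1 (hM' hx) with h' | h'
      · rcases Finset.mem_union.1 h' with h'' | h''
        · exact Finset.disjoint_left.1 hIJ hb (Finset.erase_subset _ _ h'')
        · exact (Finset.mem_erase.1 h'').1 rfl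
      · exact Finset.disjoint_left.1 hIK hb h'
    have haM : a ∉ M' := by
      intro hx
      rcases Finset.mem_union.1 (hM' hx) with h' | h'
      · rcases Finset.mem_union.1 h' with h'' | h''
        · exact (Finset.mem_erase.1 h'').1 rfl
        · exact Finset.disjoint_left.1 hIJ (Finset.erase_subset _ _ h'') ha
      · exact Finset.disjoint_left.1 hJK ha h'
    exact (h0 b a M' hne hbM haM).1 hba
  have hCI0 : CI0 (mMap E) := fun I J K _ _ _ => ⟨hswap I J K, hswap J I K⟩
  have hCI1 : CI1 (mMap E) := by
    intro I J K L hIJ hIK hIL hJK hJL hKL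
    constructor
    · rintro ⟨⟨_, _, _, hA⟩, ⟨_, _, _, hB⟩⟩
      refine ⟨Finset.disjoint_union_right.2 ⟨hIJ, hIK⟩, hIL,
        Finset.disjoint_union_left.2 ⟨hJL, hKL⟩, ?_⟩
      intro i hi t ht M hLM hMs
      exact elemKey E h1 i (I.erase i) J K L
        (Finset.notMem_erase _ _)
        (Finset.disjoint_left.1 hIJ hi) (Finset.disjoint_left.1 hIK hi)
        (Finset.disjoint_left.1 hIL hi)
        (hIJ.mono_left (Finset.erase_subset _ _)) (hIK.mono_left (Finset.erase_subset _ _))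
        (hIL.mono_left (Finset.erase_subset _ _)) hJK hJL hKL
        (fun t' ht' M' ha hb => hA i hi t' ht' M' ha hb)
        (fun k hk M' ha hb => hB i hi k hk M' ha hb) t ht M hLM hMs
    · rintro ⟨hd1, hd2, hd3, h⟩
      constructor
      · refine ⟨hIJ, Finset.disjoint_union_right.2 ⟨hIK, hIL⟩,
          Finset.disjoint_union_right.2 ⟨hJK, hJL⟩, ?_⟩
        intro i hi j hj M hKLM hMs
        refine h i hi j (Finset.mem_union_left _ hj) M
          (Finset.subset_union_right.trans hKLM) ?_
        intro x hx
        have hx' := hMs hx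
        simp only [Finset.mem_union, Finset.mem_erase] at hx' ⊢
        rcases hx' with (h' | h') | (h' | h')
        · tauto
        · tauto
        · exact Or.inl (Or.inr ⟨fun hh => Finset.disjoint_left.1 hJK hj (hh ▸ h'), Or.inr h'⟩)
        · tauto
      · refine ⟨hIK, hIL, hKL, ?_⟩
        intro i hi k hk M hLM hMs
        refine h i hi k (Finset.mem_union_right _ hk) M hLM ?_
        intro x hx
        have hx' := hMs hx
        simp only [Finset.mem_union, Finset.mem_erase] at hx' ⊢
        tauto
  refine ⟨⟨hCI0, hCI1⟩, ?_, ?_⟩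
  · apply Set.Subset.antisymm
    · rintro ⟨a, b, C⟩ hT
      exact ⟨{a}, {b}, C, hsingle _ hT, Finset.mem_singleton_self a,
        Finset.mem_singleton_self b, subset_rfl, by simp [Finset.erase_singleton]⟩
    · rintro ⟨a, b, C⟩ ⟨I, J, K, ⟨_, _, _, h⟩, ha, hb, hs1, hs2⟩
      exact h a ha b hb C hs1 hs2
  · apply Set.Subset.antisymm
    · intro T hT
      exact hsingle T hT
    · rintro ⟨a, b, C⟩ ⟨_, _, _, h⟩
      exact h a (Finset.mem_singleton_self a) b (Finset.mem_singleton_self b) C subset_rfl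
        (by simp [Finset.erase_singleton])
end

section
/- Let V be a finite set and let M be an independence model over V satisfying CI0, CI1 and CI2. Then the set e(M) of elementary triplets derived from M satisfies ci2: for all distinct i,j,k ∈ V and L ⊆ V∖{i,j,k}, if i⊥j|{k}∪L ∈ e(M) and i⊥k|{j}∪L ∈ e(M), then i⊥j|L ∈ e(M) and i⊥k|L ∈ e(M). -/
/-!
On a semi-graphoid (CI0 and CI1, i.e. symmetry, decomposition and weak union) the elementary
triplet `i ⊥ j | M'` lies in `e(M)` exactly when `{i} ⊥ {j} | M'` lies in `M`: from a witness
`I ⊥ J | K`, weak union moves `A = M' ∩ (I \ {i})` and `B = M' ∩ (J \ {j})` into the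
conditioning set and decomposition then shrinks both sides to singletons. Hence ci2 for `e(M)`
is CI2 for `M` applied to singletons.
-/

variable {V : Type*} [DecidableEq V]

/-- CI2 (intersection): for all pairwise disjoint `I J K L`,
`(I ⊥ J | K ∪ L ∈ M and I ⊥ K | J ∪ L ∈ M) → (I ⊥ J | L ∈ M and I ⊥ K | L ∈ M)`. -/
def CI2 (M : Set (Finset V × Finset V × Finset V)) : Prop :=
  ∀ I J K L : Finset V, Disjoint I J → Disjoint I K → Disjoint I L →
    Disjoint J K → Disjoint J L → Disjoint K L →
    ((I, J, K ∪ L) ∈ M ∧ (I, K, J ∪ L) ∈ M) → ((I, J, L) ∈ M ∧ (I, K, L) ∈ M)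

/-- ci2: for all distinct `i j k` and `L ⊆ V \ {i, j, k}`,
`(i ⊥ j | {k} ∪ L ∈ E and i ⊥ k | {j} ∪ L ∈ E) → (i ⊥ j | L ∈ E and i ⊥ k | L ∈ E)`. -/
def ci2 (E : Set (V × V × Finset V)) : Prop :=
  ∀ (i j k : V) (L : Finset V), i ≠ j → i ≠ k → j ≠ k → i ∉ L → j ∉ L → k ∉ L →
    ((i, j, insert k L) ∈ E ∧ (i, k, insert j L) ∈ E) →
      ((i, j, L) ∈ E ∧ (i, k, L) ∈ E)

section SemiGraphoid

variable {M : Set (Finset V × Finset V × Finset V)}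
  (hM : ∀ T ∈ M, Disjoint T.1 T.2.1 ∧ Disjoint T.1 T.2.2 ∧ Disjoint T.2.1 T.2.2)
  {I J K A B : Finset V}
include hM

omit [DecidableEq V] in
theorem CI0.mem_swap (h0 : CI0 M) (hT : (I, J, K) ∈ M) : (J, I, K) ∈ M :=
  let ⟨hIJ, hIK, hJK⟩ := hM _ hT
  (h0 I J K hIJ hIK hJK).mp hT

theorem CI1.mem_sdiff_union_and_mem_of_subset (h1 : CI1 M) (hT : (I, J, K) ∈ M)
    (hB : B ⊆ J) : (I, J \ B, B ∪ K) ∈ M ∧ (I, B, K) ∈ M := by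
  obtain ⟨hIJ, hIK, hJK⟩ := hM _ hT
  refine (h1 I (J \ B) B K (hIJ.mono_right Finset.sdiff_subset) (hIJ.mono_right hB) hIK
    Finset.sdiff_disjoint (hJK.mono_left Finset.sdiff_subset) (hJK.mono_left hB)).mpr ?_
  rwa [Finset.sdiff_union_of_subset hB]

theorem mem_of_subset_of_subset (h0 : CI0 M) (h1 : CI1 M) (hT : (I, J, K) ∈ M)
    (hA : A ⊆ I) (hB : B ⊆ J) : (A, B, K) ∈ M := by
  have hIB := (h1.mem_sdiff_union_and_mem_of_subset hM hT hB).2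
  have hBA := (h1.mem_sdiff_union_and_mem_of_subset hM (h0.mem_swap hM hIB) hA).2
  exact h0.mem_swap hM hBA

theorem mem_sdiff_sdiff_union (h0 : CI0 M) (h1 : CI1 M) (hT : (I, J, K) ∈ M)
    (hA : A ⊆ I) (hB : B ⊆ J) : (I \ A, J \ B, A ∪ B ∪ K) ∈ M := by
  have hJB := (h1.mem_sdiff_union_and_mem_of_subset hM hT hB).1
  have hIA := (h1.mem_sdiff_union_and_mem_of_subset hM (h0.mem_swap hM hJB) hA).1
  rw [Finset.union_assoc]
  exact h0.mem_swap hM hIA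

theorem mem_eMap_iff (h0 : CI0 M) (h1 : CI1 M) (i j : V) (M' : Finset V) :
    (i, j, M') ∈ eMap M ↔ ({i}, {j}, M') ∈ M := by
  refine ⟨?_, fun h => ⟨{i}, {j}, M', h, Finset.mem_singleton_self i,
    Finset.mem_singleton_self j, subset_rfl, Finset.subset_union_right⟩⟩
  rintro ⟨I, J, K, hT, hi, hj, hKM, hMsub⟩
  set A := M' ∩ I.erase i
  set B := M' ∩ J.erase j
  have hM' : A ∪ B ∪ K = M' := by
    refine subset_antisymm (Finset.union_subset (Finset.union_subset
      Finset.inter_subset_left Finset.inter_subset_left) hKM) fun x hx => ?_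
    have := hMsub hx
    simp only [A, B, Finset.mem_union, Finset.mem_inter] at this ⊢
    tauto
  have hAB := mem_sdiff_sdiff_union hM h0 h1 hT (A := A) (B := B)
    (Finset.inter_subset_right.trans (I.erase_subset i))
    (Finset.inter_subset_right.trans (J.erase_subset j))
  rw [hM'] at hAB
  refine mem_of_subset_of_subset hM h0 h1 hAB ?_ ?_ <;>
    simp [A, B, hi, hj]

end SemiGraphoid

theorem eMap_ci2_of_CI012_general (M : Set (Finset V × Finset V × Finset V))
    (hM : ∀ T ∈ M, Disjoint T.1 T.2.1 ∧ Disjoint T.1 T.2.2 ∧ Disjoint T.2.1 T.2.2)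
    (h0 : CI0 M) (h1 : CI1 M) (h2 : CI2 M) :
    ci2 (eMap M) := by
  intro i j k L hij hik hjk hiL hjL hkL ⟨hj, hk⟩
  simp only [mem_eMap_iff hM h0 h1, Finset.insert_eq] at hj hk ⊢
  exact h2 {i} {j} {k} L (Finset.disjoint_singleton.mpr hij) (Finset.disjoint_singleton.mpr hik)
    (Finset.disjoint_singleton_left.mpr hiL) (Finset.disjoint_singleton.mpr hjk)
    (Finset.disjoint_singleton_left.mpr hjL) (Finset.disjoint_singleton_left.mpr hkL) ⟨hj, hk⟩

/-- If an independence model `M` over a finite set `V` satisfies CI0, CI1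
and CI2, then `e(M)` satisfies ci2. -/
theorem eMap_ci2_of_CI012 [Fintype V] (M : Set (Finset V × Finset V × Finset V))
    (hM : ∀ T ∈ M, Disjoint T.1 T.2.1 ∧ Disjoint T.1 T.2.2 ∧ Disjoint T.2.1 T.2.2)
    (h0 : CI0 M) (h1 : CI1 M) (h2 : CI2 M) :
    ci2 (eMap M) :=
  eMap_ci2_of_CI012_general M hM h0 h1 h2
end

section
/- Let V be a finite set and let M be an independence model over V satisfying CI0, CI1 and CI3. Then the set e(M) of elementary triplets derived from M satisfies ci3: for all distinct i,j,k ∈ V and L ⊆ V∖{i,j,k}, if i⊥j|L ∈ e(M) and i⊥k|L ∈ e(M), then i⊥j|{k}∪L ∈ e(M) and i⊥k|{j}∪L ∈ e(M). -/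
variable {V : Type*} [DecidableEq V]

/-- CI3 (composition): for all pairwise disjoint `I J K L`,
`(I ⊥ J | L ∈ M and I ⊥ K | L ∈ M) → (I ⊥ J | K ∪ L ∈ M and I ⊥ K | J ∪ L ∈ M)`. -/
def CI3 (M : Set (Finset V × Finset V × Finset V)) : Prop :=
  ∀ I J K L : Finset V, Disjoint I J → Disjoint I K → Disjoint I L →
    Disjoint J K → Disjoint J L → Disjoint K L →
    ((I, J, L) ∈ M ∧ (I, K, L) ∈ M) → ((I, J, K ∪ L) ∈ M ∧ (I, K, J ∪ L) ∈ M)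

/-- ci3: for all distinct `i j k` and `L ⊆ V \ {i, j, k}`,
`(i ⊥ j | L ∈ E and i ⊥ k | L ∈ E) → (i ⊥ j | {k} ∪ L ∈ E and i ⊥ k | {j} ∪ L ∈ E)`. -/
def ci3 (E : Set (V × V × Finset V)) : Prop :=
  ∀ (i j k : V) (L : Finset V), i ≠ j → i ≠ k → j ≠ k → i ∉ L → j ∉ L → k ∉ L →
    ((i, j, L) ∈ E ∧ (i, k, L) ∈ E) →
      ((i, j, insert k L) ∈ E ∧ (i, k, insert j L) ∈ E)

/-! Every elementary triplet `i ⊥ j | M'` of `e(M)` is already in `M` as `{i} ⊥ {j} | M'`: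
starting from its witness `I ⊥ J | K`, decomposition and weak union (both packaged in CI1)
shrink `J` to `{j}` while moving `M' ∩ J` into the conditioning set, and symmetry (CI0) lets
us do the same on the `I` side. On singletons, ci3 for `e(M)` is then just CI3 for `M`. -/

open Finset

section

variable {M : Set (Finset V × Finset V × Finset V)}

/-- Decomposition followed by weak union. -/
theorem CI1.mem_union_of_subset (h1 : CI1 M) {I J K J₀ A : Finset V}
    (hIJ : Disjoint I J) (hIK : Disjoint I K) (hJK : Disjoint J K) (hm : (I, J, K) ∈ M)
    (hJ₀ : J₀ ⊆ J) (hA : A ⊆ J) (hJ₀A : Disjoint J₀ A) :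
    (I, J₀, A ∪ K) ∈ M := by
  have hJ₀A_J : J₀ ∪ A ⊆ J := union_subset hJ₀ hA
  have hdecomp : (I, J₀ ∪ A, K) ∈ M := by
    refine ((h1 I (J \ (J₀ ∪ A)) (J₀ ∪ A) K (hIJ.mono_right sdiff_subset)
      (hIJ.mono_right hJ₀A_J) hIK sdiff_disjoint (hJK.mono_left sdiff_subset)
      (hJK.mono_left hJ₀A_J)).mpr ?_).2
    rwa [sdiff_union_of_subset hJ₀A_J]
  exact ((h1 I J₀ A K (hIJ.mono_right hJ₀) (hIJ.mono_right hA) hIK hJ₀A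
    (hJK.mono_left hJ₀) (hJK.mono_left hA)).mpr hdecomp).1

theorem mem_of_mem_eMap
    (hM : ∀ T ∈ M, Disjoint T.1 T.2.1 ∧ Disjoint T.1 T.2.2 ∧ Disjoint T.2.1 T.2.2)
    (h0 : CI0 M) (h1 : CI1 M) {i j : V} {M' : Finset V} (h : (i, j, M') ∈ eMap M) :
    ({i}, {j}, M') ∈ M := by
  obtain ⟨I, J, K, hm, hiI, hjJ, hKM', hM'⟩ := h
  obtain ⟨hIJ, hIK, hJK⟩ := hM _ hm
  set A := M' ∩ I.erase i
  set B := M' ∩ J.erase j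
  have hAI : A ⊆ I := inter_subset_right.trans (erase_subset i I)
  have hBJ : B ⊆ J := inter_subset_right.trans (erase_subset j J)
  have hiA : Disjoint {i} A :=
    disjoint_singleton_left.mpr fun hiA => notMem_erase i I (inter_subset_right hiA)
  have hjB : Disjoint {j} B :=
    disjoint_singleton_left.mpr fun hjB => notMem_erase j J (inter_subset_right hjB)
  have hiI' : {i} ⊆ I := singleton_subset_iff.mpr hiI
  have hjJ' : {j} ⊆ J := singleton_subset_iff.mpr hjJ
  have hIBK : Disjoint I (B ∪ K) := disjoint_union_right.mpr ⟨hIJ.mono_right hBJ, hIK⟩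
  have hJ_side : (I, {j}, B ∪ K) ∈ M := h1.mem_union_of_subset hIJ hIK hJK hm hjJ' hBJ hjB
  have hjI : Disjoint {j} I := (hIJ.mono_right hjJ').symm
  have hjBK : Disjoint {j} (B ∪ K) :=
    disjoint_union_right.mpr ⟨hjB, hJK.mono_left hjJ'⟩
  have hI_side : ({j}, {i}, A ∪ (B ∪ K)) ∈ M :=
    h1.mem_union_of_subset hjI hjBK hIBK ((h0 _ _ _ hjI.symm hIBK hjBK).mp hJ_side)
      hiI' hAI hiA
  have hcond : A ∪ (B ∪ K) = M' := by
    refine Subset.antisymm (union_subset inter_subset_left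
      (union_subset inter_subset_left hKM')) fun x hx => ?_
    have := hM' hx
    simp only [mem_union, mem_inter, A, B] at this ⊢
    tauto
  rw [← hcond]
  exact (h0 {j} {i} _ (hjI.mono_right hiI')
    (disjoint_union_right.mpr ⟨hjI.mono_right hAI, hjBK⟩)
    (disjoint_union_right.mpr ⟨hiA, hIBK.mono_left hiI'⟩)).mp hI_side

theorem mem_eMap_of_mem {i j : V} {L : Finset V} (h : ({i}, {j}, L) ∈ M) :
    (i, j, L) ∈ eMap M :=
  ⟨{i}, {j}, L, h, mem_singleton_self i, mem_singleton_self j, subset_rfl,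
    subset_union_right⟩

end

theorem eMap_ci3_of_CI013_general (M : Set (Finset V × Finset V × Finset V))
    (hM : ∀ T ∈ M, Disjoint T.1 T.2.1 ∧ Disjoint T.1 T.2.2 ∧ Disjoint T.2.1 T.2.2)
    (h0 : CI0 M) (h1 : CI1 M) (h3 : CI3 M) :
    ci3 (eMap M) := by
  intro i j k L hij hik hjk hiL hjL hkL ⟨hj, hk⟩
  obtain ⟨hjk_mem, hkj_mem⟩ := h3 {i} {j} {k} L (disjoint_singleton.mpr hij)
    (disjoint_singleton.mpr hik) (disjoint_singleton_left.mpr hiL)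
    (disjoint_singleton.mpr hjk) (disjoint_singleton_left.mpr hjL)
    (disjoint_singleton_left.mpr hkL)
    ⟨mem_of_mem_eMap hM h0 h1 hj, mem_of_mem_eMap hM h0 h1 hk⟩
  rw [← insert_eq] at hjk_mem hkj_mem
  exact ⟨mem_eMap_of_mem hjk_mem, mem_eMap_of_mem hkj_mem⟩

/-- If an independence model `M` over a finite set `V` satisfies CI0, CI1
and CI3, then `e(M)` satisfies ci3. -/
theorem eMap_ci3_of_CI013 [Fintype V] (M : Set (Finset V × Finset V × Finset V))
    (hM : ∀ T ∈ M, Disjoint T.1 T.2.1 ∧ Disjoint T.1 T.2.2 ∧ Disjoint T.2.1 T.2.2)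
    (h0 : CI0 M) (h1 : CI1 M) (h3 : CI3 M) :
    ci3 (eMap M) :=
  eMap_ci3_of_CI013_general M hM h0 h1 h3
end

section
/- Let V be a finite set and let E be a set of elementary triplets over V satisfying ci0, ci1 and ci2. Then the independence model m(E) satisfies CI2: for all pairwise disjoint I,J,K,L ⊆ V, if I⊥J|K∪L ∈ m(E) and I⊥K|J∪L ∈ m(E), then I⊥J|L ∈ m(E) and I⊥K|L ∈ m(E). -/
variable {V : Type*} [DecidableEq V]

/-!
Fix `i ∈ I`. By downward induction on `M`, `i ⊥ x | M ∈ E` for all `M` with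
`L ⊆ M ⊆ I ∪ J ∪ K ∪ L`, `i ∉ M` and all `x ∈ (J ∪ K) \ M`. Say `x ∈ J`. If `K ⊆ M`, this is
part of `I ⊥ J | K ∪ L ∈ m(E)`. Otherwise pick `k ∈ K \ M`: the induction hypothesis gives
`i ⊥ x | M ∪ {k}` and `i ⊥ k | M ∪ {x}`, and ci2 yields `i ⊥ x | M`.
-/

section

variable {E : Set (V × V × Finset V)} {I J K L M : Finset V} {i j : V}

theorem subset_erase_union_erase_union_iff (hiJ : i ∉ J) (hiK : i ∉ K) (hjI : j ∉ I)
    (hjK : j ∉ K) :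
    M ⊆ I.erase i ∪ J.erase j ∪ K ↔ M ⊆ I ∪ J ∪ K ∧ i ∉ M ∧ j ∉ M := by
  simp only [Finset.subset_iff, Finset.mem_union, Finset.mem_erase]
  grind

theorem mem_mMap_iff :
    (I, J, K) ∈ mMap E ↔ Disjoint I J ∧ Disjoint I K ∧ Disjoint J K ∧
      ∀ i ∈ I, ∀ j ∈ J, ∀ M : Finset V, K ⊆ M → M ⊆ I ∪ J ∪ K → i ∉ M → j ∉ M →
        (i, j, M) ∈ E := by
  refine and_congr_right fun hIJ => and_congr_right fun hIK => and_congr_right fun hJK =>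
    forall₂_congr fun i hi => forall₂_congr fun j hj => forall_congr' fun M =>
      imp_congr_right fun _ => ?_
  rw [subset_erase_union_erase_union_iff (Finset.disjoint_left.mp hIJ hi)
    (Finset.disjoint_left.mp hIK hi) (Finset.disjoint_right.mp hIJ hj)
    (Finset.disjoint_left.mp hJK hj)]
  tauto

theorem mem_of_ci2_of_forall_insert (h2 : ci2 E) (hij : i ≠ j) (hiK : i ∉ K) (hjK : j ∉ K)
    (hiM : i ∉ M) (hjM : j ∉ M) (hbase : K ⊆ M → (i, j, M) ∈ E)
    (hinsert : ∀ k ∈ K, k ∉ M → (i, j, insert k M) ∈ E ∧ (i, k, insert j M) ∈ E) :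
    (i, j, M) ∈ E := by
  by_cases hKM : K ⊆ M
  · exact hbase hKM
  obtain ⟨k, hk, hkM⟩ := Finset.not_subset.mp hKM
  have hik : i ≠ k := by rintro rfl; exact hiK hk
  have hjk : j ≠ k := by rintro rfl; exact hjK hk
  exact (h2 i j k M hij hik hjk hiM hjM hkM (hinsert k hk hkM)).1

theorem mem_of_mem_mMap_of_ci2 (h2 : ci2 E) (hA : (I, J, K ∪ L) ∈ mMap E)
    (hB : (I, K, J ∪ L) ∈ mMap E) (hi : i ∈ I) (hLM : L ⊆ M)
    (hM : M ⊆ I ∪ J ∪ (K ∪ L)) (hiM : i ∉ M) :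
    (∀ j ∈ J, j ∉ M → (i, j, M) ∈ E) ∧ (∀ k ∈ K, k ∉ M → (i, k, M) ∈ E) := by
  obtain ⟨hIJ, -, hJKL, hA⟩ := mem_mMap_iff.mp hA
  obtain ⟨hIK, -, -, hB⟩ := mem_mMap_iff.mp hB
  have hJK : Disjoint J K := (Finset.disjoint_union_right.mp hJKL).1
  have hUB : I ∪ K ∪ (J ∪ L) = I ∪ J ∪ (K ∪ L) := by
    ext; simp only [Finset.mem_union]; tauto
  have hcard := Finset.card_le_card hM
  revert hLM hM hiM
  refine Finset.strongDownwardInductionOn M (fun M ih _ hLM hM hiM => ?_) hcard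
  have hiJ : i ∉ J := Finset.disjoint_left.mp hIJ hi
  have hiK : i ∉ K := Finset.disjoint_left.mp hIK hi
  have ih_insert : ∀ x ∈ J ∪ K, x ∉ M →
      (∀ j ∈ J, j ∉ insert x M → (i, j, insert x M) ∈ E) ∧
      (∀ k ∈ K, k ∉ insert x M → (i, k, insert x M) ∈ E) := by
    intro x hx hxM
    have hxU : insert x M ⊆ I ∪ J ∪ (K ∪ L) :=
      Finset.insert_subset (by simp only [Finset.mem_union] at hx ⊢; tauto) hM
    have hix : i ≠ x := by rintro rfl; simp only [Finset.mem_union] at hx; tauto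
    exact ih (Finset.card_le_card hxU) (Finset.ssubset_insert hxM)
      (hLM.trans (Finset.subset_insert _ _)) hxU (by simp [hix, hiM])
  constructor
  · intro j hj hjM
    have hjK : j ∉ K := Finset.disjoint_left.mp hJK hj
    refine mem_of_ci2_of_forall_insert h2 (by rintro rfl; exact hiJ hj) hiK hjK hiM hjM
      (fun hKM => hA i hi j hj M (Finset.union_subset hKM hLM) hM hiM hjM) fun k hk hkM => ?_
    have hjk : j ≠ k := by rintro rfl; exact hjK hk
    exact ⟨(ih_insert k (Finset.mem_union_right _ hk) hkM).1 j hj (by simp [hjk, hjM]),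
      (ih_insert j (Finset.mem_union_left _ hj) hjM).2 k hk (by simp [hjk.symm, hkM])⟩
  · intro k hk hkM
    have hkJ : k ∉ J := Finset.disjoint_right.mp hJK hk
    refine mem_of_ci2_of_forall_insert h2 (by rintro rfl; exact hiK hk) hiJ hkJ hiM hkM
      (fun hJM => hB i hi k hk M (Finset.union_subset hJM hLM) (hUB ▸ hM) hiM hkM)
      fun j hj hjM => ?_
    have hkj : k ≠ j := by rintro rfl; exact hkJ hj
    exact ⟨(ih_insert j (Finset.mem_union_left _ hj) hjM).2 k hk (by simp [hkj, hkM]),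
      (ih_insert k (Finset.mem_union_right _ hk) hkM).1 j hj (by simp [hkj.symm, hjM])⟩

end

theorem mMap_CI2_of_ci012_general (E : Set (V × V × Finset V))
    (h2 : ci2 E) :
    CI2 (mMap E) := by
  intro I J K L hIJ hIK hIL hJK hJL hKL ⟨hA, hB⟩
  refine ⟨mem_mMap_iff.mpr ⟨hIJ, hIL, hJL, fun i hi j hj M hLM hM hiM hjM => ?_⟩,
    mem_mMap_iff.mpr ⟨hIK, hIL, hKL, fun i hi k hk M hLM hM hiM hkM => ?_⟩⟩
  · refine (mem_of_mem_mMap_of_ci2 h2 hA hB hi hLM (hM.trans ?_) hiM).1 j hj hjM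
    intro x; simp only [Finset.mem_union]; tauto
  · refine (mem_of_mem_mMap_of_ci2 h2 hA hB hi hLM (hM.trans ?_) hiM).2 k hk hkM
    intro x; simp only [Finset.mem_union]; tauto

/-- If a set `E` of elementary triplets over a finite set `V` satisfies
ci0, ci1 and ci2, then `m(E)` satisfies CI2. -/
theorem mMap_CI2_of_ci012 [Fintype V] (E : Set (V × V × Finset V))
    (hE : ∀ T ∈ E, T.1 ≠ T.2.1 ∧ T.1 ∉ T.2.2 ∧ T.2.1 ∉ T.2.2)
    (h0 : ci0 E) (h1 : ci1 E) (h2 : ci2 E) :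
    CI2 (mMap E) :=
  mMap_CI2_of_ci012_general E h2
end

section
/- Let V be a finite set and let E be a set of elementary triplets over V satisfying ci0, ci1 and ci3. Then the independence model m(E) satisfies CI3: for all pairwise disjoint I,J,K,L ⊆ V, if I⊥J|L ∈ m(E) and I⊥K|L ∈ m(E), then I⊥J|K∪L ∈ m(E) and I⊥K|J∪L ∈ m(E). -/
variable {V : Type*} [DecidableEq V]

/-!
Composition plus weak union. For fixed `i`, ci3 lets one add the elements of `J ∪ K` one at a
time to a conditioning set `C ⊆ (I \ {i}) ∪ L`, so `I ⊥ J | L` and `I ⊥ K | L` in `m(E)` give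
`I ⊥ J ∪ K | L` in `m(E)`. Moving `K` (resp. `J`) into the conditioning set is then immediate
from the definition of `m(E)`.
-/

open Finset

theorem ci3.mem_union_of_forall_mem {E : Set (V × V × Finset V)} (h3 : ci3 E) {i : V}
    {A C D : Finset V} (hiA : i ∉ A) (hiC : i ∉ C) (hAC : Disjoint A C)
    (hC : ∀ x ∈ A, (i, x, C) ∈ E) (hDA : D ⊆ A) :
    ∀ x ∈ A, x ∉ D → (i, x, C ∪ D) ∈ E := by
  induction D using Finset.induction_on with
  | empty => simpa using hC
  | insert y D hyD ih =>
    intro x hxA hxD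
    rw [mem_insert, not_or] at hxD
    have hyA : y ∈ A := hDA (mem_insert_self y D)
    have hDA' : D ⊆ A := (subset_insert y D).trans hDA
    have hnotin : ∀ z ∈ A, z ∉ D → z ∉ C ∪ D := fun z hzA hzD hz =>
      (mem_union.mp hz).elim (disjoint_left.mp hAC hzA) hzD
    have hiCD : i ∉ C ∪ D := fun h =>
      (mem_union.mp h).elim hiC fun hiD => hiA (hDA' hiD)
    have hne : ∀ z ∈ A, i ≠ z := fun z hz h => hiA (h ▸ hz)
    rw [union_insert]
    exact (h3 i x y (C ∪ D) (hne x hxA) (hne y hyA) hxD.1 hiCD (hnotin x hxA hxD.2)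
      (hnotin y hyA hyD) ⟨ih hDA' x hxA hxD.2, ih hDA' y hyA hyD⟩).1

theorem union_mem_mMap_of_ci3 {E : Set (V × V × Finset V)} (h3 : ci3 E) {I J K L : Finset V}
    (hJ : (I, J, L) ∈ mMap E) (hK : (I, K, L) ∈ mMap E) :
    (I, J ∪ K, L) ∈ mMap E := by
  obtain ⟨hIJ, hIL, hJL, hPJ⟩ := hJ
  obtain ⟨hIK, -, hKL, hPK⟩ := hK
  have hIJK : Disjoint I (J ∪ K) := disjoint_union_right.mpr ⟨hIJ, hIK⟩
  have hJKL : Disjoint (J ∪ K) L := disjoint_union_left.mpr ⟨hJL, hKL⟩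
  refine ⟨hIJK, hIL, hJKL, fun i hi x hx M hLM hM => ?_⟩
  have hiJK : i ∉ J ∪ K := disjoint_left.mp hIJK hi
  have hxM : x ∉ M := fun h => by
    have := hM h
    simp only [mem_union, mem_erase] at this hx
    grind [disjoint_left]
  -- Split `M` into its part `M \ (J ∪ K)`, which lies in `(I \ {i}) ∪ L`, and `M ∩ (J ∪ K)`.
  have hLC : L ⊆ M \ (J ∪ K) := subset_sdiff.mpr ⟨hLM, hJKL.symm⟩
  have hCsub : ∀ T : Finset V, M \ (J ∪ K) ⊆ I.erase i ∪ T ∪ L := fun T a ha => by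
    have := hM (mem_sdiff.mp ha).1
    simp only [mem_union, mem_erase, mem_sdiff] at this ha ⊢
    tauto
  have hiC : i ∉ M \ (J ∪ K) := fun h =>
    disjoint_left.mp hIL hi (by simpa using hCsub ∅ h)
  have hbase : ∀ y ∈ J ∪ K, (i, y, M \ (J ∪ K)) ∈ E := fun y hy =>
    (mem_union.mp hy).elim (fun hyJ => hPJ i hi y hyJ _ hLC (hCsub _))
      (fun hyK => hPK i hi y hyK _ hLC (hCsub _))
  have := h3.mem_union_of_forall_mem hiJK hiC disjoint_sdiff hbase inter_subset_right x hx
    (fun h => hxM (mem_inter.mp h).1)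
  rwa [sdiff_union_inter] at this

theorem mem_mMap_of_union_mem_mMap {E : Set (V × V × Finset V)} {I J K L : Finset V}
    (hJK : Disjoint J K) (h : (I, J ∪ K, L) ∈ mMap E) : (I, J, K ∪ L) ∈ mMap E := by
  obtain ⟨hIJK, hIL, hJKL, hP⟩ := h
  rw [disjoint_union_right] at hIJK
  rw [disjoint_union_left] at hJKL
  refine ⟨hIJK.1, disjoint_union_right.mpr ⟨hIJK.2, hIL⟩,
    disjoint_union_right.mpr ⟨hJK, hJKL.1⟩, fun i hi j hj M hKLM hM => ?_⟩
  refine hP i hi j (mem_union_left K hj) M (subset_union_right.trans hKLM) fun a ha => ?_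
  have hjK : j ∉ K := disjoint_left.mp hJK hj
  have := hM ha
  simp only [mem_union, mem_erase] at this ⊢
  grind

theorem mMap_CI3_of_ci013_general (E : Set (V × V × Finset V))
    (h3 : ci3 E) :
    CI3 (mMap E) := by
  intro I J K L _ _ _ hJK _ _ ⟨hJ, hK⟩
  exact ⟨mem_mMap_of_union_mem_mMap hJK (union_mem_mMap_of_ci3 h3 hJ hK),
    mem_mMap_of_union_mem_mMap hJK.symm (union_mem_mMap_of_ci3 h3 hK hJ)⟩

/-- If a set `E` of elementary triplets over a finite set `V` satisfies
ci0, ci1 and ci3, then `m(E)` satisfies CI3. -/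
theorem mMap_CI3_of_ci013 [Fintype V] (E : Set (V × V × Finset V))
    (hE : ∀ T ∈ E, T.1 ≠ T.2.1 ∧ T.1 ∉ T.2.2 ∧ T.2.1 ∉ T.2.2)
    (h0 : ci0 E) (h1 : ci1 E) (h3 : ci3 E) :
    CI3 (mMap E) :=
  mMap_CI3_of_ci013_general E h3
end

section
/- Let V be a finite set and let E be any set of elementary triplets over V (not necessarily closed under any property). Let E* denote the closure of E under ci0 and ci1 (the smallest superset of E closed under ci0 and ci1), and let m(E)* denote the closure of m(E) under CI0 and CI1 (the smallest superset of m(E) closed under CI0 and CI1). Then m(E)* = m(E*), E* = e(m(E)*), and E* equals exactly the set of elementary triplets i⊥j|K such that i⊥j|K ∈ m(E)*. -/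
variable {V : Type*} [DecidableEq V]

/-- The closure of `M` under CI0 and CI1: the smallest superset of `M` that is closed
under CI0 and CI1 (i.e. the intersection of all supersets closed under CI0 and CI1). -/
def CIclosure (M : Set (Finset V × Finset V × Finset V)) :
    Set (Finset V × Finset V × Finset V) :=
  ⋂₀ { N | M ⊆ N ∧ CI0 N ∧ CI1 N }

/-- The closure of `E` under ci0 and ci1: the smallest superset of `E` that is closed
under ci0 and ci1 (i.e. the intersection of all supersets closed under ci0 and ci1). -/
def ciclosure (E : Set (V × V × Finset V)) : Set (V × V × Finset V) :=
  ⋂₀ { N | E ⊆ N ∧ ci0 N ∧ ci1 N }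

/- ## basic closure lemmas -/

lemma subset_ciclosure (E : Set (V × V × Finset V)) : E ⊆ ciclosure E :=
  fun _ hT _ hN => hN.1 hT

lemma ciclosure_subset {E N : Set (V × V × Finset V)} (h : E ⊆ N) (h0 : ci0 N)
    (h1 : ci1 N) : ciclosure E ⊆ N :=
  Set.sInter_subset_of_mem ⟨h, h0, h1⟩

lemma ci0_ciclosure (E : Set (V × V × Finset V)) : ci0 (ciclosure E) := by
  intro i j L hij hi hj
  simp only [ciclosure, Set.mem_sInter]
  exact ⟨fun h N hN => (hN.2.1 i j L hij hi hj).mp (h N hN),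
         fun h N hN => (hN.2.1 i j L hij hi hj).mpr (h N hN)⟩

lemma ci1_ciclosure (E : Set (V × V × Finset V)) : ci1 (ciclosure E) := by
  intro i j k L hij hik hjk hi hj hk
  simp only [ciclosure, Set.mem_sInter]
  constructor
  · rintro ⟨h1, h2⟩
    have h : ∀ N ∈ {N : Set (V × V × Finset V) | E ⊆ N ∧ ci0 N ∧ ci1 N},
        (i, k, insert j L) ∈ N ∧ (i, j, L) ∈ N :=
      fun N hN => (hN.2.2 i j k L hij hik hjk hi hj hk).mp ⟨h1 N hN, h2 N hN⟩
    exact ⟨fun N hN => (h N hN).1, fun N hN => (h N hN).2⟩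
  · rintro ⟨h1, h2⟩
    have h : ∀ N ∈ {N : Set (V × V × Finset V) | E ⊆ N ∧ ci0 N ∧ ci1 N},
        (i, j, insert k L) ∈ N ∧ (i, k, L) ∈ N :=
      fun N hN => (hN.2.2 i j k L hij hik hjk hi hj hk).mpr ⟨h1 N hN, h2 N hN⟩
    exact ⟨fun N hN => (h N hN).1, fun N hN => (h N hN).2⟩

lemma subset_CIclosure (M : Set (Finset V × Finset V × Finset V)) : M ⊆ CIclosure M :=
  fun _ hT _ hN => hN.1 hT

lemma CIclosure_subset {M N : Set (Finset V × Finset V × Finset V)} (h : M ⊆ N)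
    (h0 : CI0 N) (h1 : CI1 N) : CIclosure M ⊆ N :=
  Set.sInter_subset_of_mem ⟨h, h0, h1⟩

/- ## validity -/

def Valid : Set (V × V × Finset V) := {T | T.1 ≠ T.2.1 ∧ T.1 ∉ T.2.2 ∧ T.2.1 ∉ T.2.2}

lemma ci0_valid : ci0 (Valid (V := V)) := by
  intro i j L hij hi hj
  simp [Valid, hij, hij.symm, hi, hj]

lemma ci1_valid : ci1 (Valid (V := V)) := by
  intro i j k L hij hik hjk hi hj hk
  simp [Valid, Finset.mem_insert, hij, hik, hjk, hi, hj, hk, Ne.symm hij, Ne.symm hik,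
    Ne.symm hjk]

lemma ciclosure_valid {E : Set (V × V × Finset V)}
    (hE : ∀ T ∈ E, T.1 ≠ T.2.1 ∧ T.1 ∉ T.2.2 ∧ T.2.1 ∉ T.2.2) :
    ∀ T ∈ ciclosure E, T.1 ≠ T.2.1 ∧ T.1 ∉ T.2.2 ∧ T.2.1 ∉ T.2.2 :=
  fun T hT => ciclosure_subset (fun T hT => hE T hT) ci0_valid ci1_valid hT

/- ## mMap basics -/

lemma mMap_mono {E F : Set (V × V × Finset V)} (h : E ⊆ F) : mMap E ⊆ mMap F :=
  fun _ hT => ⟨hT.1, hT.2.1, hT.2.2.1,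
    fun i hi j hj M' h1 h2 => h (hT.2.2.2 i hi j hj M' h1 h2)⟩

lemma mem_mMap_empty_right (E : Set (V × V × Finset V)) {I K : Finset V}
    (h : Disjoint I K) : (I, (∅ : Finset V), K) ∈ mMap E := by
  refine ⟨by simp, h, by simp, ?_⟩
  intro i hi j hj
  simp at hj

lemma mem_mMap_empty_left (E : Set (V × V × Finset V)) {J K : Finset V}
    (h : Disjoint J K) : ((∅ : Finset V), J, K) ∈ mMap E := by
  refine ⟨by simp, by simp, h, ?_⟩
  intro i hi
  simp at hi

lemma CI0_mMap {E' : Set (V × V × Finset V)} (h0 : ci0 E') : CI0 (mMap E') := by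
  have key : ∀ I J K : Finset V, (I, J, K) ∈ mMap E' → (J, I, K) ∈ mMap E' := by
    rintro I J K ⟨d1, d2, d3, h⟩
    refine ⟨d1.symm, d3, d2, ?_⟩
    intro j hj i hi M' hKM hM
    have hij : i ≠ j := fun e => Finset.disjoint_left.mp d1 (e ▸ hi) hj
    have hM' : M' ⊆ I.erase i ∪ J.erase j ∪ K := by
      intro x hx
      have := hM hx
      simp only [Finset.mem_union] at this ⊢
      tauto
    have hiM : i ∉ M' := by
      intro hmem
      rcases Finset.mem_union.mp (hM' hmem) with h' | h'
      · rcases Finset.mem_union.mp h' with h'' | h''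
        · exact (Finset.mem_erase.mp h'').1 rfl
        · exact Finset.disjoint_left.mp d1 hi (Finset.mem_of_mem_erase h'')
      · exact Finset.disjoint_left.mp d2 hi h'
    have hjM : j ∉ M' := by
      intro hmem
      rcases Finset.mem_union.mp (hM' hmem) with h' | h'
      · rcases Finset.mem_union.mp h' with h'' | h''
        · exact Finset.disjoint_left.mp d1 (Finset.mem_of_mem_erase h'') hj
        · exact (Finset.mem_erase.mp h'').1 rfl
      · exact Finset.disjoint_left.mp d3 hj h'
    exact (h0 i j M' hij hiM hjM).mp (h i hi j hj M' hKM hM')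
  intro I J K _ _ _
  exact ⟨key I J K, key J I K⟩

set_option maxHeartbeats 1000000 in
lemma CI1_mMap {E' : Set (V × V × Finset V)} (h1 : ci1 E') : CI1 (mMap E') := by
  intro I J K L hIJ hIK hIL hJK hJL hKL
  constructor
  · rintro ⟨hJm, hKm⟩
    have hJe : ∀ i ∈ I, ∀ j ∈ J, ∀ M'' : Finset V, K ∪ L ⊆ M'' →
        M'' ⊆ I.erase i ∪ J.erase j ∪ (K ∪ L) → (i, j, M'') ∈ E' := hJm.2.2.2
    have hKe : ∀ i ∈ I, ∀ k ∈ K, ∀ M'' : Finset V, L ⊆ M'' →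
        M'' ⊆ I.erase i ∪ K.erase k ∪ L → (i, k, M'') ∈ E' := hKm.2.2.2
    refine ⟨Finset.disjoint_union_right.mpr ⟨hIJ, hIK⟩, hIL,
      Finset.disjoint_union_left.mpr ⟨hJL, hKL⟩, ?_⟩
    intro i hi j hj M' hLM hM
    -- facts about i
    have hiJ : i ∉ J := Finset.disjoint_left.mp hIJ hi
    have hiK : i ∉ K := Finset.disjoint_left.mp hIK hi
    have hiL : i ∉ L := Finset.disjoint_left.mp hIL hi
    -- base case for the k-part
    have baseK : ∀ k ∈ K, ∀ M'' : Finset V, L ⊆ M'' →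
        M'' ⊆ I.erase i ∪ J ∪ K.erase k ∪ L → M'' ∩ J = ∅ → (i, k, M'') ∈ E' := by
      intro k hk M'' hLM'' hsub hMJ
      have hJM : ∀ x ∈ M'', x ∉ J := by
        intro x hx hxJ
        exact (Finset.eq_empty_iff_forall_notMem.mp hMJ x)
          (Finset.mem_inter.mpr ⟨hx, hxJ⟩)
      refine hKe i hi k hk M'' hLM'' ?_
      intro x hx
      have := hsub hx
      simp only [Finset.mem_union] at this ⊢
      rcases this with ((h' | h') | h') | h'
      · tauto
      · exact absurd h' (hJM x hx)
      · tauto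
      · tauto
    -- the main double induction
    have main : ∀ n : ℕ,
        (∀ j' ∈ J, ∀ M'' : Finset V, L ⊆ M'' →
          M'' ⊆ I.erase i ∪ J.erase j' ∪ K ∪ L →
          (K \ M'').card + (M'' ∩ J).card + 1 ≤ n → (i, j', M'') ∈ E') ∧
        (∀ k ∈ K, ∀ M'' : Finset V, L ⊆ M'' →
          M'' ⊆ I.erase i ∪ J ∪ K.erase k ∪ L →
          (K \ M'').card + (M'' ∩ J).card ≤ n → (i, k, M'') ∈ E') := by
      intro n
      induction n with
      | zero =>
        constructor
        · intro j' _ M'' _ _ hb; omega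
        · intro k hk M'' hLM'' hsub hb
          refine baseK k hk M'' hLM'' hsub ?_
          refine Finset.eq_empty_iff_forall_notMem.mpr fun x hx => ?_
          have : (M'' ∩ J).card ≠ 0 := Finset.card_ne_zero_of_mem hx
          omega
      | succ n ih =>
        constructor
        · -- Pj case
          intro j' hj' M'' hLM'' hsub hb
          have hj'I : j' ∉ I := Finset.disjoint_right.mp hIJ hj'
          have hj'K : j' ∉ K := Finset.disjoint_left.mp hJK hj'
          have hj'L : j' ∉ L := Finset.disjoint_left.mp hJL hj'
          have hj'M : j' ∉ M'' := by
            intro hmem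
            have := hsub hmem
            simp only [Finset.mem_union, Finset.mem_erase] at this
            rcases this with ((h' | h') | h') | h' <;> tauto
          have hiM : i ∉ M'' := by
            intro hmem
            have := hsub hmem
            simp only [Finset.mem_union, Finset.mem_erase] at this
            rcases this with ((h' | h') | h') | h' <;> tauto
          by_cases hKM : K ⊆ M''
          · refine hJe i hi j' hj' M'' (Finset.union_subset hKM hLM'') ?_
            intro x hx
            have := hsub hx
            simp only [Finset.mem_union] at this ⊢
            tauto
          · obtain ⟨k, hkK, hkM⟩ := Finset.not_subset.mp hKM
            have hkJ : k ∉ J := Finset.disjoint_right.mp hJK hkK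
            have hik : i ≠ k := fun e => hiK (e ▸ hkK)
            have hij' : i ≠ j' := fun e => hiJ (e ▸ hj')
            have hj'k : j' ≠ k := fun e => hj'K (e ▸ hkK)
            have hA : (i, j', insert k M'') ∈ E' := by
              apply ih.1 j' hj' (insert k M'') (hLM''.trans (Finset.subset_insert _ _))
              · intro x hx
                rcases Finset.mem_insert.mp hx with rfl | hx'
                · simp only [Finset.mem_union]
                  exact Or.inl (Or.inr hkK)
                · have := hsub hx'
                  simp only [Finset.mem_union] at this ⊢
                  tauto
              · have hkin : k ∈ K \ M'' := Finset.mem_sdiff.mpr ⟨hkK, hkM⟩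
                have e1 : K \ insert k M'' = (K \ M'').erase k := by
                  ext x
                  simp only [Finset.mem_sdiff, Finset.mem_erase, Finset.mem_insert]
                  tauto
                have e2 : insert k M'' ∩ J = M'' ∩ J := by
                  ext x
                  simp only [Finset.mem_inter, Finset.mem_insert]
                  constructor
                  · rintro ⟨rfl | hx, hxJ⟩
                    · exact absurd hxJ hkJ
                    · exact ⟨hx, hxJ⟩
                  · rintro ⟨hx, hxJ⟩; exact ⟨Or.inr hx, hxJ⟩
                have hc : ((K \ M'').erase k).card = (K \ M'').card - 1 :=
                  Finset.card_erase_of_mem hkin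
                have hpos : 0 < (K \ M'').card := Finset.card_pos.mpr ⟨k, hkin⟩
                rw [e1, e2, hc]
                omega
            have hB : (i, k, M'') ∈ E' := by
              apply ih.2 k hkK M'' hLM''
              · intro x hx
                have hxk : x ≠ k := fun e => hkM (e ▸ hx)
                have := hsub hx
                simp only [Finset.mem_union, Finset.mem_erase] at this ⊢
                tauto
              · omega
            exact ((h1 i j' k M'' hij' hik hj'k hiM hj'M hkM).mp ⟨hA, hB⟩).2
        · -- Pk case
          intro k hk M'' hLM'' hsub hb
          have hkI : k ∉ I := Finset.disjoint_right.mp hIK hk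
          have hkJ : k ∉ J := Finset.disjoint_right.mp hJK hk
          have hkL : k ∉ L := Finset.disjoint_left.mp hKL hk
          have hkM : k ∉ M'' := by
            intro hmem
            have := hsub hmem
            simp only [Finset.mem_union, Finset.mem_erase] at this
            rcases this with ((h' | h') | h') | h' <;> tauto
          have hiM : i ∉ M'' := by
            intro hmem
            have := hsub hmem
            simp only [Finset.mem_union, Finset.mem_erase] at this
            rcases this with ((h' | h') | h') | h' <;> tauto
          rcases Finset.eq_empty_or_nonempty (M'' ∩ J) with hMJ | ⟨j', hj'⟩
          · exact baseK k hk M'' hLM'' hsub hMJ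
          · have hj'M : j' ∈ M'' := (Finset.mem_inter.mp hj').1
            have hj'J : j' ∈ J := (Finset.mem_inter.mp hj').2
            have hij' : i ≠ j' := fun e => hiJ (e ▸ hj'J)
            have hik : i ≠ k := fun e => hiK (e ▸ hk)
            have hj'k : j' ≠ k := fun e => hkJ (e ▸ hj'J)
            have hiL₀ : i ∉ M''.erase j' := fun h => hiM (Finset.mem_of_mem_erase h)
            have hj'L₀ : j' ∉ M''.erase j' := Finset.notMem_erase _ _
            have hkL₀ : k ∉ M''.erase j' := fun h => hkM (Finset.mem_of_mem_erase h)
            have hLL₀ : L ⊆ M''.erase j' := by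
              intro x hx
              exact Finset.mem_erase.mpr
                ⟨fun e => (Finset.disjoint_right.mp hJL hx) (e ▸ hj'J), hLM'' hx⟩
            have hsub1 : K \ M''.erase j' ⊆ K \ M'' := by
              intro x hx
              rcases Finset.mem_sdiff.mp hx with ⟨hxK, hxL₀⟩
              refine Finset.mem_sdiff.mpr ⟨hxK, fun hxM => hxL₀ ?_⟩
              exact Finset.mem_erase.mpr
                ⟨fun e => (Finset.disjoint_left.mp hJK hj'J) (e ▸ hxK), hxM⟩
            have hinter : M''.erase j' ∩ J = (M'' ∩ J).erase j' := by
              ext x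
              simp only [Finset.mem_inter, Finset.mem_erase]
              tauto
            have hcard1 : (M''.erase j' ∩ J).card = (M'' ∩ J).card - 1 := by
              rw [hinter]; exact Finset.card_erase_of_mem hj'
            have hpos : 0 < (M'' ∩ J).card := Finset.card_pos.mpr ⟨j', hj'⟩
            have hA : (i, j', insert k (M''.erase j')) ∈ E' := by
              apply ih.1 j' hj'J (insert k (M''.erase j'))
                (hLL₀.trans (Finset.subset_insert _ _))
              · intro x hx
                rcases Finset.mem_insert.mp hx with rfl | hx'
                · simp only [Finset.mem_union]
                  exact Or.inl (Or.inr hk)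
                · have hxM : x ∈ M'' := Finset.mem_of_mem_erase hx'
                  have hxj' : x ≠ j' := (Finset.mem_erase.mp hx').1
                  have := hsub hxM
                  simp only [Finset.mem_union, Finset.mem_erase] at this ⊢
                  tauto
              · have e1 : K \ insert k (M''.erase j') ⊆ (K \ M'').erase k := by
                  intro x hx
                  rcases Finset.mem_sdiff.mp hx with ⟨hxK, hxI⟩
                  have hxk : x ≠ k := fun e => hxI (e ▸ Finset.mem_insert_self _ _)
                  refine Finset.mem_erase.mpr ⟨hxk, ?_⟩
                  have hnL₀ : x ∉ M''.erase j' := fun h => hxI (Finset.mem_insert_of_mem h)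
                  exact Finset.mem_sdiff.mpr ⟨hxK, fun hxM => hnL₀
                    (Finset.mem_erase.mpr
                      ⟨fun e => (Finset.disjoint_left.mp hJK hj'J) (e ▸ hxK), hxM⟩)⟩
                have hkin : k ∈ K \ M'' := Finset.mem_sdiff.mpr ⟨hk, hkM⟩
                have c1 : (K \ insert k (M''.erase j')).card ≤ (K \ M'').card - 1 :=
                  le_trans (Finset.card_le_card e1)
                    (le_of_eq (Finset.card_erase_of_mem hkin))
                have hKpos : 0 < (K \ M'').card := Finset.card_pos.mpr ⟨k, hkin⟩
                have e2 : insert k (M''.erase j') ∩ J = M''.erase j' ∩ J := by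
                  ext x
                  simp only [Finset.mem_inter, Finset.mem_insert]
                  constructor
                  · rintro ⟨rfl | hx, hxJ⟩
                    · exact absurd hxJ hkJ
                    · exact ⟨hx, hxJ⟩
                  · rintro ⟨hx, hxJ⟩; exact ⟨Or.inr hx, hxJ⟩
                rw [e2, hcard1]
                omega
            have hB : (i, k, M''.erase j') ∈ E' := by
              apply ih.2 k hk (M''.erase j') hLL₀
              · intro x hx
                have := hsub (Finset.mem_of_mem_erase hx)
                simp only [Finset.mem_union] at this ⊢
                tauto
              · have := Finset.card_le_card hsub1
                rw [hcard1]
                omega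
            have hres :=
              ((h1 i j' k (M''.erase j') hij' hik hj'k hiL₀ hj'L₀ hkL₀).mp ⟨hA, hB⟩).1
            rwa [Finset.insert_erase hj'M] at hres
    -- finish forward direction
    rcases Finset.mem_union.mp hj with hjJ | hjK
    · apply (main ((K \ M').card + (M' ∩ J).card + 1)).1 j hjJ M' hLM _ le_rfl
      intro x hx
      have := hM hx
      simp only [Finset.mem_union, Finset.mem_erase] at this ⊢
      tauto
    · apply (main ((K \ M').card + (M' ∩ J).card)).2 j hjK M' hLM _ le_rfl
      intro x hx
      have := hM hx
      simp only [Finset.mem_union, Finset.mem_erase] at this ⊢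
      tauto
  · rintro ⟨d1, d2, d3, hmem⟩
    have d1' : Disjoint I (J ∪ K) := d1
    have d2' : Disjoint I L := d2
    have d3' : Disjoint (J ∪ K) L := d3
    have h : ∀ i ∈ I, ∀ j ∈ J ∪ K, ∀ M'' : Finset V, L ⊆ M'' →
        M'' ⊆ I.erase i ∪ (J ∪ K).erase j ∪ L → (i, j, M'') ∈ E' := hmem
    have hd1 := Finset.disjoint_union_right.mp d1'
    have hd3 := Finset.disjoint_union_left.mp d3'
    constructor
    · refine ⟨hd1.1, Finset.disjoint_union_right.mpr ⟨hd1.2, d2'⟩,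
        Finset.disjoint_union_right.mpr ⟨hJK, hd3.1⟩, ?_⟩
      intro i hi j hjJ M' hKLM hM
      have hjK : j ∉ K := Finset.disjoint_left.mp hJK hjJ
      apply h i hi j (Finset.mem_union_left _ hjJ) M'
        ((Finset.subset_union_right).trans hKLM)
      intro x hx
      have := hM hx
      simp only [Finset.mem_union, Finset.mem_erase] at this ⊢
      rcases this with (h' | h') | (h' | h')
      · tauto
      · tauto
      · exact Or.inl (Or.inr ⟨fun e => hjK (e ▸ h'), Or.inr h'⟩)
      · tauto
    · refine ⟨hd1.2, d2', hd3.2, ?_⟩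
      intro i hi k hkK M' hLM hM
      have hkJ : k ∉ J := Finset.disjoint_right.mp hJK hkK
      apply h i hi k (Finset.mem_union_right _ hkK) M' hLM
      intro x hx
      have := hM hx
      simp only [Finset.mem_union, Finset.mem_erase] at this ⊢
      tauto

lemma compose_one {N : Set (Finset V × Finset V × Finset V)} (h1 : CI1 N)
    (hemp : ∀ I K : Finset V, Disjoint I K → (I, (∅ : Finset V), K) ∈ N) (i : V) :
    ∀ J K : Finset V, Disjoint J K → i ∉ J → i ∉ K →
      (∀ j ∈ J, ∀ M' : Finset V, K ⊆ M' → M' ⊆ J.erase j ∪ K → ({i}, {j}, M') ∈ N) →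
      ({i}, J, K) ∈ N := by
  intro J
  induction J using Finset.induction_on with
  | empty =>
    intro K _ _ hiK _
    exact hemp {i} K (Finset.disjoint_singleton_left.mpr hiK)
  | @insert j J' hjJ' ih =>
    intro K hdisj hiJ hiK hsing
    have hij : i ≠ j := fun e => hiJ (e ▸ Finset.mem_insert_self j J')
    have hiJ' : i ∉ J' := fun h => hiJ (Finset.mem_insert_of_mem h)
    have hjK : j ∉ K := Finset.disjoint_left.mp hdisj (Finset.mem_insert_self j J')
    have hJ'K : Disjoint J' K := hdisj.mono_left (Finset.subset_insert _ _)
    have key := h1 {i} J' {j} K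
      (Finset.disjoint_singleton_left.mpr hiJ')
      (Finset.disjoint_singleton_left.mpr (by simpa using hij))
      (Finset.disjoint_singleton_left.mpr hiK)
      (Finset.disjoint_singleton_right.mpr hjJ') hJ'K
      (Finset.disjoint_singleton_left.mpr hjK)
    have hA : ({i}, J', {j} ∪ K) ∈ N := by
      rw [← Finset.insert_eq]
      apply ih (insert j K)
        (Finset.disjoint_insert_right.mpr ⟨hjJ', hJ'K⟩) hiJ'
        (by simp [hij, hiK])
      intro j' hj' M' hKM hM
      apply hsing j' (Finset.mem_insert_of_mem hj') M'
        ((Finset.subset_insert _ _).trans hKM)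
      intro x hx
      have hx' := hM hx
      simp only [Finset.mem_union, Finset.mem_erase, Finset.mem_insert] at hx' ⊢
      have hjj' : j ≠ j' := fun e => hjJ' (e ▸ hj')
      rcases hx' with ⟨hne, hxJ'⟩ | (rfl | hxK)
      · exact Or.inl ⟨hne, Or.inr hxJ'⟩
      · exact Or.inl ⟨hjj', Or.inl rfl⟩
      · exact Or.inr hxK
    have hB : ({i}, {j}, K) ∈ N :=
      hsing j (Finset.mem_insert_self _ _) K (subset_refl K) Finset.subset_union_right
    have := key.mp ⟨hA, hB⟩
    rwa [Finset.union_comm, ← Finset.insert_eq] at this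

lemma compose {N : Set (Finset V × Finset V × Finset V)} (h0 : CI0 N) (h1 : CI1 N)
    (hemp : ∀ I K : Finset V, Disjoint I K → (I, (∅ : Finset V), K) ∈ N)
    (hemp' : ∀ J K : Finset V, Disjoint J K → ((∅ : Finset V), J, K) ∈ N) :
    ∀ I J K : Finset V, Disjoint I J → Disjoint I K → Disjoint J K →
      (∀ i ∈ I, ∀ j ∈ J, ∀ M' : Finset V, K ⊆ M' →
        M' ⊆ I.erase i ∪ J.erase j ∪ K → ({i}, {j}, M') ∈ N) →
      (I, J, K) ∈ N := by
  intro I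
  induction I using Finset.induction_on with
  | empty =>
    intro J K _ _ hJK _
    exact hemp' J K hJK
  | @insert i I' hiI' ih =>
    intro J K hIJ hIK hJK hsing
    have hiJ : i ∉ J := Finset.disjoint_left.mp hIJ (Finset.mem_insert_self i I')
    have hiK : i ∉ K := Finset.disjoint_left.mp hIK (Finset.mem_insert_self i I')
    have hI'J : Disjoint I' J := hIJ.mono_left (Finset.subset_insert _ _)
    have hI'K : Disjoint I' K := hIK.mono_left (Finset.subset_insert _ _)
    have key := h1 J I' {i} K hI'J.symm
      (Finset.disjoint_singleton_right.mpr hiJ) hJK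
      (Finset.disjoint_singleton_right.mpr hiI') hI'K
      (Finset.disjoint_singleton_left.mpr hiK)
    have hA : (J, I', {i} ∪ K) ∈ N := by
      rw [← Finset.insert_eq]
      have hI'insert : Disjoint I' (insert i K) :=
        Finset.disjoint_insert_right.mpr ⟨hiI', hI'K⟩
      have hJinsert : Disjoint J (insert i K) :=
        Finset.disjoint_insert_right.mpr ⟨hiJ, hJK⟩
      refine (h0 I' J (insert i K) hI'J hI'insert hJinsert).mp ?_
      apply ih J (insert i K) hI'J hI'insert hJinsert
      intro i' hi' j hj M' hKM hM
      apply hsing i' (Finset.mem_insert_of_mem hi') j hj M'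
        ((Finset.subset_insert _ _).trans hKM)
      intro x hx
      have hx' := hM hx
      have hii' : i ≠ i' := fun e => hiI' (e ▸ hi')
      simp only [Finset.mem_union, Finset.mem_erase, Finset.mem_insert] at hx' ⊢
      rcases hx' with (⟨hne, hxI⟩ | hxJ) | (rfl | hxK)
      · exact Or.inl (Or.inl ⟨hne, Or.inr hxI⟩)
      · exact Or.inl (Or.inr hxJ)
      · exact Or.inl (Or.inl ⟨hii', Or.inl rfl⟩)
      · exact Or.inr hxK
    have hB : (J, {i}, K) ∈ N := by
      refine (h0 {i} J K (Finset.disjoint_singleton_left.mpr hiJ)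
        (Finset.disjoint_singleton_left.mpr hiK) hJK).mp ?_
      apply compose_one h1 hemp i J K hJK hiJ hiK
      intro j hj M' hKM hM
      apply hsing i (Finset.mem_insert_self _ _) j hj M' hKM
      intro x hx
      have := hM hx
      simp only [Finset.mem_union] at this ⊢
      tauto
    have hres := key.mp ⟨hA, hB⟩
    rw [Finset.union_comm, ← Finset.insert_eq] at hres
    exact (h0 (insert i I') J K hIJ hIK hJK).mpr hres

lemma singleton_mem_mMap {E : Set (V × V × Finset V)} {T : V × V × Finset V} (hT : T ∈ E)
    (hv : T.1 ≠ T.2.1 ∧ T.1 ∉ T.2.2 ∧ T.2.1 ∉ T.2.2) :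
    ({T.1}, {T.2.1}, T.2.2) ∈ mMap E := by
  obtain ⟨a, b, c⟩ := T
  obtain ⟨h1, h2, h3⟩ := hv
  refine ⟨by simpa using h1, by simpa using h2, by simpa using h3, ?_⟩
  intro i hi j hj M' hKM hM
  simp only [Finset.mem_singleton] at hi hj
  subst hi; subst hj
  have hMK : M' = c := by
    refine subset_antisymm ?_ hKM
    simpa [Finset.erase_singleton] using hM
  subst hMK
  exact hT

lemma singleton_mem_of_closed {E : Set (V × V × Finset V)}
    (hE : ∀ T ∈ E, T.1 ≠ T.2.1 ∧ T.1 ∉ T.2.2 ∧ T.2.1 ∉ T.2.2)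
    {N : Set (Finset V × Finset V × Finset V)} (hm : mMap E ⊆ N) (h0 : CI0 N)
    (h1 : CI1 N) : ∀ T ∈ ciclosure E, ({T.1}, {T.2.1}, T.2.2) ∈ N := by
  have key : ciclosure E ⊆ {T : V × V × Finset V | ({T.1}, {T.2.1}, T.2.2) ∈ N} := by
    apply ciclosure_subset
    · intro T hT
      exact hm (singleton_mem_mMap hT (hE T hT))
    · intro i j L hij hi hj
      exact h0 {i} {j} L (Finset.disjoint_singleton.mpr hij)
        (Finset.disjoint_singleton_left.mpr hi) (Finset.disjoint_singleton_left.mpr hj)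
    · intro i j k L hij hik hjk hi hj hk
      have e1 := h1 {i} {j} {k} L (Finset.disjoint_singleton.mpr hij)
        (Finset.disjoint_singleton.mpr hik) (Finset.disjoint_singleton_left.mpr hi)
        (Finset.disjoint_singleton.mpr hjk) (Finset.disjoint_singleton_left.mpr hj)
        (Finset.disjoint_singleton_left.mpr hk)
      have e2 := h1 {i} {k} {j} L (Finset.disjoint_singleton.mpr hik)
        (Finset.disjoint_singleton.mpr hij) (Finset.disjoint_singleton_left.mpr hi)
        (Finset.disjoint_singleton.mpr (Ne.symm hjk)) (Finset.disjoint_singleton_left.mpr hk)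
        (Finset.disjoint_singleton_left.mpr hj)
      rw [← Finset.insert_eq] at e1 e2
      have ecomm : ({j} ∪ {k} : Finset V) = {k} ∪ {j} := Finset.union_comm _ _
      rw [ecomm] at e1
      exact e1.trans e2.symm
  exact fun T hT => key hT

/-- For any set `E` of elementary triplets over a finite set `V` (not
necessarily closed under any property), writing `E*` for the closure of `E` under ci0 and
ci1 and `m(E)*` for the closure of `m(E)` under CI0 and CI1: `m(E)* = m(E*)`,
`E* = e(m(E)*)`, and `E*` is exactly the set of elementary triplets `i ⊥ j | K` with
`{i} ⊥ {j} | K ∈ m(E)*`. -/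
theorem closure_mMap [Fintype V] (E : Set (V × V × Finset V))
    (hE : ∀ T ∈ E, T.1 ≠ T.2.1 ∧ T.1 ∉ T.2.2 ∧ T.2.1 ∉ T.2.2) :
    CIclosure (mMap E) = mMap (ciclosure E) ∧
      ciclosure E = eMap (CIclosure (mMap E)) ∧
      ciclosure E =
        { T : V × V × Finset V | ({T.1}, {T.2.1}, T.2.2) ∈ CIclosure (mMap E) } := by
  have part1 : CIclosure (mMap E) = mMap (ciclosure E) := by
    apply subset_antisymm
    · exact CIclosure_subset (mMap_mono (subset_ciclosure E))
        (CI0_mMap (ci0_ciclosure E)) (CI1_mMap (ci1_ciclosure E))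
    · rintro ⟨I, J, K⟩ hT N hN
      obtain ⟨hmN, h0N, h1N⟩ := hN
      obtain ⟨d1, d2, d3, helem⟩ := hT
      apply compose h0N h1N
        (fun I K h => hmN (mem_mMap_empty_right E h))
        (fun J K h => hmN (mem_mMap_empty_left E h)) I J K d1 d2 d3
      intro i hi j hj M' hKM hM
      exact singleton_mem_of_closed hE hmN h0N h1N (i, j, M')
        (helem i hi j hj M' hKM hM)
  refine ⟨part1, ?_, ?_⟩
  · rw [part1]
    ext T
    constructor
    · intro hT
      exact ⟨{T.1}, {T.2.1}, T.2.2, singleton_mem_mMap hT (ciclosure_valid hE T hT),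
        Finset.mem_singleton_self _, Finset.mem_singleton_self _, subset_refl _,
        by simp [Finset.erase_singleton]⟩
    · rintro ⟨I, J, K, hM, hi, hj, hs1, hs2⟩
      exact hM.2.2.2 T.1 hi T.2.1 hj T.2.2 hs1 hs2
  · rw [part1]
    ext T
    constructor
    · intro hT
      exact singleton_mem_mMap hT (ciclosure_valid hE T hT)
    · intro hT
      exact hT.2.2.2 T.1 (Finset.mem_singleton_self _) T.2.1 (Finset.mem_singleton_self _)
        T.2.2 (subset_refl _) (by simp [Finset.erase_singleton])
end
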